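/- arXiv:1007.0058 — 3 statements merged into one kernel-verified Lean document; each statement's English description precedes it below -/
import Mathlib

section
/- Let A be a unital C*-algebra and a ∈ A with Im a := (a - a*)/(2i) ≥ ε·1 for some ε > 0. Then a is invertible in A and Im(a⁻¹) ≤ 0; more precisely, Im(a⁻¹) = -(√v)⁻¹ · (((√v)⁻¹ u (√v)⁻¹)² + 1)⁻¹ · (√v)⁻¹ < 0, where u = Re a and v = Im a. -/
open scoped ComplexOrder

variable {A : Type*}

/-- Imaginary part of an element of a complex star algebra: `(a - a*)/(2i)`. -/
noncomputable def aIm [Ring A] [StarRing A] [Module ℂ A] (a : A) : A :=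
  ((2 * Complex.I)⁻¹ : ℂ) • (a - star a)

/-- Real part of an element of a complex star algebra: `(a + a*)/2`. -/
noncomputable def aRe [Ring A] [StarRing A] [Module ℂ A] (a : A) : A :=
  ((2 : ℂ)⁻¹) • (a + star a)

/-!
Write `u = Re a` and `v = Im a`. Since `v ≥ ε > 0`, `s = √v` is invertible and
`a = u + i s² = s (w + i) s` with `w = s⁻¹ u s⁻¹` self-adjoint. The commuting factors of
`(w + i)(w - i) = w² + 1 ≥ 1` are invertible, hence so is `a`. Everything else follows from
`Im (a⁻¹) = -(a⁻¹)* (Im a) a⁻¹`: it exhibits `-Im (a⁻¹)` as a unit congruence of the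
strictly positive `v`, and it equals `-(a v⁻¹ a*)⁻¹ = -(s (w² + 1) s)⁻¹`.
-/

open scoped Ring

section StarModule

variable [Ring A] [StarRing A] [Module ℂ A]

lemma aRe_add_I_smul_aIm (a : A) : aRe a + Complex.I • aIm a = a := by
  rw [aRe, aIm, smul_smul, mul_inv_rev, ← mul_assoc, Complex.mul_inv_cancel Complex.I_ne_zero,
    one_mul, ← smul_add, add_add_sub_cancel, ← two_smul ℂ a, smul_smul,
    inv_mul_cancel₀ two_ne_zero, one_smul]

variable [StarModule ℂ A]

lemma aIm_isSelfAdjoint (a : A) : IsSelfAdjoint (aIm a) := by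
  have hc : star (2 * Complex.I)⁻¹ = -(2 * Complex.I)⁻¹ := by simp
  rw [IsSelfAdjoint, aIm, star_smul, star_sub, star_star, hc, neg_smul, ← smul_neg, neg_sub]

lemma aRe_isSelfAdjoint (a : A) : IsSelfAdjoint (aRe a) := by
  have hc : star (2 : ℂ)⁻¹ = (2 : ℂ)⁻¹ := by simp
  rw [IsSelfAdjoint, aRe, star_smul, star_add, star_star, hc, add_comm]

lemma aRe_sub_I_smul_aIm (a : A) : aRe a - Complex.I • aIm a = star a := by
  conv_rhs => rw [← aRe_add_I_smul_aIm a]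
  rw [star_add, star_smul, (aRe_isSelfAdjoint a).star_eq, (aIm_isSelfAdjoint a).star_eq,
    Complex.star_def, Complex.conj_I, neg_smul, sub_eq_add_neg]

end StarModule

section Algebra

variable [Ring A] [Algebra ℂ A]

lemma add_smul_mul_self_eq {s : A} (hs : IsUnit s) (u : A) (c : ℂ) :
    u + c • (s * s) = s * (s⁻¹ʳ * u * s⁻¹ʳ + algebraMap ℂ A c) * s := by
  have hu : s * (s⁻¹ʳ * u * s⁻¹ʳ) * s = u := by
    simp only [mul_assoc, Ring.mul_inverse_cancel_left _ _ hs, Ring.inverse_mul_cancel _ hs,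
      mul_one]
  rw [mul_add, add_mul, hu, ← Algebra.commutes, mul_assoc, ← Algebra.smul_def]

lemma add_algebraMap_I_mul_sub_algebraMap_I (w : A) :
    (w + algebraMap ℂ A Complex.I) * (w - algebraMap ℂ A Complex.I) = w ^ 2 + 1 := by
  rw [← (Algebra.commute_algebraMap_right Complex.I w).mul_self_sub_mul_self_eq, ← map_mul,
    Complex.I_mul_I, map_neg, map_one, sub_neg_eq_add, sq]

lemma sub_algebraMap_I_mul_add_algebraMap_I (w : A) :
    (w - algebraMap ℂ A Complex.I) * (w + algebraMap ℂ A Complex.I) = w ^ 2 + 1 := by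
  rw [← (Algebra.commute_algebraMap_right Complex.I w).mul_self_sub_mul_self_eq', ← map_mul,
    Complex.I_mul_I, map_neg, map_one, sub_neg_eq_add, sq]

variable [StarRing A]

lemma aIm_inverse {a : A} (ha : IsUnit a) : aIm a⁻¹ʳ = -(star a⁻¹ʳ * aIm a * a⁻¹ʳ) := by
  have hleft : star a⁻¹ʳ * star a = 1 := by
    rw [← star_mul, Ring.mul_inverse_cancel a ha, star_one]
  have hdiff : a⁻¹ʳ - star a⁻¹ʳ = star a⁻¹ʳ * (star a - a) * a⁻¹ʳ := by
    rw [mul_sub, sub_mul, hleft, one_mul, mul_assoc, Ring.mul_inverse_cancel a ha, mul_one]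
  rw [aIm, aIm, hdiff, ← smul_mul_assoc, ← mul_smul_comm, ← neg_sub a, smul_neg, mul_neg,
    neg_mul]

lemma aIm_inverse_eq_neg_inverse {a : A} (ha : IsUnit a) (hv : IsUnit (aIm a)) :
    aIm a⁻¹ʳ = -(a * (aIm a)⁻¹ʳ * star a)⁻¹ʳ := by
  rw [aIm_inverse ha, Ring.inverse_mul (.inl (ha.mul hv.ringInverse)),
    Ring.inverse_mul (.inl ha), Ring.inverse_inverse hv, Ring.inverse_star, mul_assoc]

end Algebra

section CStarAlgebra

variable [CStarAlgebra A] [PartialOrder A] [StarOrderedRing A]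

lemma IsStrictlyPositive.exists_pos_algebraMap_le {a : A} (ha : IsStrictlyPositive a) :
    ∃ r > 0, algebraMap ℝ A r ≤ a := by
  obtain _ | _ := subsingleton_or_nontrivial A
  · exact ⟨1, one_pos, (Subsingleton.elim _ _).le⟩
  · exact (CFC.exists_pos_algebraMap_le_iff ha.isSelfAdjoint).2 fun x hx ↦ ha.spectrum_pos hx

lemma IsSelfAdjoint.isStrictlyPositive_sq_add_one {w : A} (hw : IsSelfAdjoint w) :
    IsStrictlyPositive (w ^ 2 + 1) :=
  IsStrictlyPositive.nonneg_add hw.sq_nonneg isStrictlyPositive_one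

lemma IsSelfAdjoint.isUnit_add_algebraMap_I {w : A} (hw : IsSelfAdjoint w) :
    IsUnit (w + algebraMap ℂ A Complex.I) := by
  have hcomm : Commute (w + algebraMap ℂ A Complex.I) (w - algebraMap ℂ A Complex.I) := by
    rw [commute_iff_eq, add_algebraMap_I_mul_sub_algebraMap_I,
      sub_algebraMap_I_mul_add_algebraMap_I]
  have hunit := hw.isStrictlyPositive_sq_add_one.isUnit
  rw [← add_algebraMap_I_mul_sub_algebraMap_I, hcomm.isUnit_mul_iff] at hunit
  exact hunit.1

end CStarAlgebra

/-- If `Im a ≥ ε·1` for some `ε > 0`, then `a` is invertible, the imaginary part of its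
inverse is given by the explicit formula `-(√v)⁻¹(((√v)⁻¹u(√v)⁻¹)² + 1)⁻¹(√v)⁻¹`
(with `u = Re a`, `v = Im a`), and `Im (a⁻¹) < 0`. -/
theorem im_inverse_of_im_pos [CStarAlgebra A] [PartialOrder A] [StarOrderedRing A]
    (a : A) (hε : ∃ ε : ℝ, 0 < ε ∧ (ε : ℂ) • (1 : A) ≤ aIm a) :
    IsUnit a ∧
      aIm (Ring.inverse a) =
        -(Ring.inverse (CFC.sqrt (aIm a)) *
            Ring.inverse
              ((Ring.inverse (CFC.sqrt (aIm a)) * aRe a * Ring.inverse (CFC.sqrt (aIm a))) ^ 2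
                + 1) *
          Ring.inverse (CFC.sqrt (aIm a))) ∧
      ∃ δ : ℝ, 0 < δ ∧ aIm (Ring.inverse a) ≤ -((δ : ℂ) • (1 : A)) := by
  obtain ⟨ε, hε, hεv⟩ := hε
  set v := aIm a
  set s := CFC.sqrt v
  set w := s⁻¹ʳ * aRe a * s⁻¹ʳ
  have hv : IsStrictlyPositive v :=
    (isStrictlyPositive_algebraMap hε).of_le ((Algebra.algebraMap_eq_smul_one ε).trans_le hεv)
  have hs : IsUnit s := hv.isUnit_cfcSqrt
  have hss : s * s = v := CFC.sqrt_mul_sqrt_self v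
  have hw : IsSelfAdjoint w :=
    (aRe_isSelfAdjoint a).conjugate_self (IsSelfAdjoint.of_nonneg (CFC.sqrt_nonneg v)).ringInverse
  have ha : a = s * (w + algebraMap ℂ A Complex.I) * s := by
    rw [← add_smul_mul_self_eq hs, hss, aRe_add_I_smul_aIm]
  have ha' : star a = s * (w - algebraMap ℂ A Complex.I) * s := by
    rw [sub_eq_add_neg, ← map_neg, ← add_smul_mul_self_eq hs, hss, neg_smul, ← sub_eq_add_neg,
      aRe_sub_I_smul_aIm]
  have hunit : IsUnit a := ha ▸ (hs.mul hw.isUnit_add_algebraMap_I).mul hs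
  have hM : a * v⁻¹ʳ * star a = s * (w ^ 2 + 1) * s := by
    rw [ha', ha, ← hss, Ring.inverse_mul (.inl hs), ← add_algebraMap_I_mul_sub_algebraMap_I]
    simp only [mul_assoc, Ring.inverse_mul_cancel_left _ _ hs, Ring.mul_inverse_cancel_left _ _ hs]
  refine ⟨hunit, ?_, ?_⟩
  · rw [aIm_inverse_eq_neg_inverse hunit hv.isUnit, hM, Ring.inverse_mul (.inr hs),
      Ring.inverse_mul (.inl hs), mul_assoc]
  · obtain ⟨δ, hδ, hle⟩ :=
      (hunit.ringInverse.isStrictlyPositive_star_left_conjugate_iff.mpr hv).exists_pos_algebraMap_le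
    refine ⟨δ, hδ, ?_⟩
    rw [aIm_inverse hunit]
    exact neg_le_neg ((Algebra.algebraMap_eq_smul_one δ).symm.trans_le hle)
end

section
/- Let {k_n} be an increasing sequence of positive integers and {μ_n} a sequence of compactly supported probability measures on ℝ with Boolean transforms B_{μ_n}. Then the Boolean convolution powers μ_n^{⊎ k_n} converge in moments to a compactly supported probability measure μ if and only if for all z in a neighborhood of 0, lim_{n→∞} k_n·(M_{μ_n}(z) - 1) = B_μ(z), where M denotes the moment generating function. -/
open MeasureTheory Filter

/-- Moment generating function `M_σ(z) = ∫ (1 - tz)⁻¹ dσ(t)`. -/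
noncomputable def momGen (σ : Measure ℝ) (z : ℂ) : ℂ :=
  ∫ t : ℝ, ((1 : ℂ) - (t : ℂ) * z)⁻¹ ∂σ

/-- Boolean transform `B_σ(z) = 1 - M_σ(z)⁻¹`, i.e. the solution of `M_σ - 1 = B_σ·M_σ`. -/
noncomputable def boolT (σ : Measure ℝ) (z : ℂ) : ℂ := 1 - (momGen σ z)⁻¹

/-- `p`-th moment of `σ`. -/
noncomputable def moment (σ : Measure ℝ) (p : ℕ) : ℝ := ∫ t : ℝ, t ^ p ∂σ

/-!
For measures supported in `[-M, M]` and `|z| < 1/M`, `M_σ(z) = ∑ m_p(σ) z^p` with `|m_p| ≤ M^p`.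
Hence convergence in moments is equivalent to pointwise convergence of `M_{σ_n}` on a neighbourhood
of `0`: one way by dominated convergence of the series, the other by extracting the coefficients of
uniformly dominated power series. Near `0` all `M` are close to `1`, so this is convergence of
`B_{σ_n} = 1 - M_{σ_n}⁻¹` to `B_μ`. Since `B_{σ_n} = k_n B_{μ_n}` with `k_n → ∞`, each side forces
`M_{μ_n} → 1`, and `k_n (M_{μ_n} - 1) = B_{σ_n} M_{μ_n}` links the two limits.
-/

open Topology

lemma eventually_mul_lt_nhdsGT (a : ℝ) {b : ℝ} (hb : 0 < b) : ∀ᶠ x : ℝ in 𝓝[>] 0, a * x < b :=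
  nhdsWithin_le_nhds <|
    ((continuous_const_mul a).tendsto' 0 0 (mul_zero a)).eventually_lt_const hb

section PowerSeries

variable {C R : ℝ}

lemma summable_mul_pow_of_norm_le {d : ℕ → ℂ} (hR : 0 ≤ R) (hd : ∀ j, ‖d j‖ ≤ C * R ^ j)
    {z : ℂ} (hz : R * ‖z‖ < 1) : Summable fun j => d j * z ^ j := by
  refine .of_norm_bounded ((summable_geometric_of_lt_one (by positivity) hz).mul_left C) fun j => ?_
  rw [norm_mul, norm_pow, mul_pow, ← mul_assoc]
  exact mul_le_mul_of_nonneg_right (hd j) (by positivity)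

lemma norm_tsum_mul_pow_sub_coeff_zero_le {d : ℕ → ℂ} (hR : 0 ≤ R) (hd : ∀ j, ‖d j‖ ≤ C * R ^ j)
    {z : ℂ} (hz : R * ‖z‖ ≤ 1 / 2) : ‖∑' j, d j * z ^ j - d 0‖ ≤ 2 * C * R * ‖z‖ := by
  have hC : 0 ≤ C := by simpa using (norm_nonneg _).trans (hd 0)
  have hRz : 0 ≤ R * ‖z‖ := by positivity
  rw [(summable_mul_pow_of_norm_le hR hd (by linarith)).tsum_eq_zero_add, pow_zero, mul_one,
    add_sub_cancel_left]
  have hgeom := (hasSum_geometric_of_lt_one hRz (by linarith)).mul_left (C * R * ‖z‖)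
  have hterm : ∀ j, ‖d (j + 1) * z ^ (j + 1)‖ ≤ C * R * ‖z‖ * (R * ‖z‖) ^ j := fun j => by
    calc ‖d (j + 1) * z ^ (j + 1)‖ ≤ C * R ^ (j + 1) * ‖z‖ ^ (j + 1) := by
          rw [norm_mul, norm_pow]; gcongr; exact hd _
      _ = C * R * ‖z‖ * (R * ‖z‖) ^ j := by ring
  calc ‖∑' j, d (j + 1) * z ^ (j + 1)‖ ≤ C * R * ‖z‖ * (1 - R * ‖z‖)⁻¹ :=
        tsum_of_norm_bounded hgeom hterm
    _ ≤ C * R * ‖z‖ * 2 := by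
        gcongr
        rw [inv_le_comm₀ (by linarith) two_pos]
        linarith
    _ = 2 * C * R * ‖z‖ := by ring

/-- By induction on `p`: the series with its first `p` terms removed, divided by `x ^ p`, tends to
`0`, and it differs from the `p`-th coefficient by `O(x)`. -/
lemma tendsto_coeff_zero_of_tendsto_tsum {c : ℕ → ℕ → ℂ} (hR : 0 ≤ R)
    (hc : ∀ n p, ‖c n p‖ ≤ C * R ^ p)
    (h : ∀ᶠ x : ℝ in 𝓝[>] 0, Tendsto (fun n => ∑' p, c n p * (x : ℂ) ^ p) atTop (𝓝 0)) (p : ℕ) :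
    Tendsto (fun n => c n p) atTop (𝓝 0) := by
  induction p using Nat.strong_induction_on with
  | _ p ih =>
  rw [Metric.tendsto_nhds]
  intro ε hε
  obtain ⟨x, ⟨⟨hx, hxR⟩, hxε⟩, hx0 : 0 < x⟩ :=
    (((h.and (eventually_mul_lt_nhdsGT R one_half_pos)).and
      (eventually_mul_lt_nhdsGT (2 * (C * R ^ p) * R) (half_pos hε))).and
      self_mem_nhdsWithin).exists
  have hxz : ‖(x : ℂ)‖ = x := by rw [Complex.norm_real, Real.norm_of_nonneg hx0.le]
  have hshift : ∀ n j, ‖c n (j + p)‖ ≤ C * R ^ p * R ^ j := fun n j => by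
    rw [mul_assoc, ← pow_add, add_comm p]; exact hc n _
  set g : ℕ → ℂ := fun n => ∑' j, c n (j + p) * (x : ℂ) ^ j
  have hg_eq : ∀ n, g n = ((x : ℂ) ^ p)⁻¹ *
      (∑' j, c n j * (x : ℂ) ^ j - ∑ j ∈ Finset.range p, c n j * (x : ℂ) ^ j) := fun n => by
    have hsum := summable_mul_pow_of_norm_le hR (hc n) (by rw [hxz]; linarith)
    rw [← hsum.sum_add_tsum_nat_add p, add_sub_cancel_left,
      eq_inv_mul_iff_mul_eq₀ (pow_ne_zero p (Complex.ofReal_ne_zero.2 hx0.ne')), ← tsum_mul_left]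
    exact tsum_congr fun j => by ring
  have hg : Tendsto g atTop (𝓝 0) := by
    have hfin : Tendsto (fun n => ∑ j ∈ Finset.range p, c n j * (x : ℂ) ^ j) atTop (𝓝 0) := by
      simpa using tendsto_finsetSum (Finset.range p) fun j hj =>
        (ih j (Finset.mem_range.1 hj)).mul_const ((x : ℂ) ^ j)
    simpa [funext hg_eq] using (hx.sub hfin).const_mul ((x : ℂ) ^ p)⁻¹
  filter_upwards [Metric.tendsto_nhds.1 hg _ (half_pos hε)] with n hn
  have htail := norm_tsum_mul_pow_sub_coeff_zero_le hR (hshift n) (by rw [hxz]; linarith)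
  rw [hxz, zero_add] at htail
  rw [dist_zero_right] at hn ⊢
  calc ‖c n p‖ ≤ ‖g n‖ + ‖g n - c n p‖ := norm_le_norm_add_norm_sub _ _
    _ < ε / 2 + ε / 2 := add_lt_add_of_lt_of_le hn (htail.trans hxε.le)
    _ = ε := add_halves ε

end PowerSeries

section Moments

variable {σ : Measure ℝ} {M : ℝ}

lemma ae_abs_le_of_measure_compl_Icc (h : σ (Set.Icc (-M) M)ᶜ = 0) : ∀ᵐ t ∂σ, |t| ≤ M :=
  (measure_eq_zero_iff_ae_notMem.1 h).mono fun _ ht => abs_le.2 (not_not.1 ht)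

lemma norm_moment_le [IsProbabilityMeasure σ] (h : ∀ᵐ t ∂σ, |t| ≤ M) (p : ℕ) :
    ‖(moment σ p : ℂ)‖ ≤ M ^ p := by
  rw [Complex.norm_real]
  simpa [moment] using norm_integral_le_of_norm_le_const (μ := σ) (f := fun t => t ^ p)
    (h.mono fun t ht => by rw [norm_pow]; exact pow_le_pow_left₀ (abs_nonneg t) ht p)

lemma hasSum_momGen [IsFiniteMeasure σ] (hM : 0 ≤ M) (h : ∀ᵐ t ∂σ, |t| ≤ M) {z : ℂ}
    (hz : M * ‖z‖ < 1) : HasSum (fun p => (moment σ p : ℂ) * z ^ p) (momGen σ z) := by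
  set F : ℕ → ℝ → ℂ := fun p t => ((t : ℂ) * z) ^ p
  have hbound : ∀ p, ∀ᵐ t ∂σ, ‖F p t‖ ≤ (M * ‖z‖) ^ p := fun p => h.mono fun t ht => by
    simp only [F, norm_pow, norm_mul, Complex.norm_real, Real.norm_eq_abs]
    gcongr
  have hint : ∀ p, Integrable (F p) σ := fun p =>
    (integrable_const _).mono' (by fun_prop) (hbound p)
  have hsummable : Summable fun p => ∫ t, ‖F p t‖ ∂σ := by
    refine .of_nonneg_of_le (fun p => integral_nonneg fun t => norm_nonneg _) (fun p => ?_)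
      ((summable_geometric_of_lt_one (by positivity) hz).mul_left (σ.real Set.univ))
    simpa using integral_mono_ae (hint p).norm (integrable_const _) (hbound p)
  have hterm : ∀ p, ∫ t, F p t ∂σ = (moment σ p : ℂ) * z ^ p := fun p => by
    simp only [F, mul_pow, integral_mul_const, moment]
    rw [← integral_complex_ofReal]
    push_cast
    rfl
  have hsum : ∫ t, ∑' p, F p t ∂σ = momGen σ z := integral_congr_ae <| h.mono fun t ht => by
    refine tsum_geometric_of_norm_lt_one ?_
    rw [norm_mul, Complex.norm_real, Real.norm_eq_abs]
    exact (mul_le_mul_of_nonneg_right ht (norm_nonneg z)).trans_lt hz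
  simpa only [hterm, hsum] using hasSum_integral_of_summable_integral_norm hint hsummable

lemma norm_momGen_sub_one_le [IsProbabilityMeasure σ] (hM : 0 ≤ M) (h : ∀ᵐ t ∂σ, |t| ≤ M)
    {z : ℂ} (hz : M * ‖z‖ ≤ 1 / 2) : ‖momGen σ z - 1‖ ≤ 2 * M * ‖z‖ := by
  have := norm_tsum_mul_pow_sub_coeff_zero_le (C := 1) hM
    (fun j => by rw [one_mul]; exact norm_moment_le h j) hz
  rw [(hasSum_momGen hM h (z := z) (by linarith)).tsum_eq] at this
  simpa [moment, mul_assoc] using this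

lemma momGen_ne_zero [IsProbabilityMeasure σ] (hM : 0 ≤ M) (h : ∀ᵐ t ∂σ, |t| ≤ M) {z : ℂ}
    (hz : M * ‖z‖ < 1 / 2) : momGen σ z ≠ 0 := by
  intro h0
  have := norm_momGen_sub_one_le hM h hz.le
  rw [h0, zero_sub, norm_neg, norm_one] at this
  linarith

variable {σn : ℕ → Measure ℝ} [∀ n, IsProbabilityMeasure (σn n)]

lemma tendsto_momGen_of_tendsto_moment [IsFiniteMeasure σ] (hM : 0 ≤ M)
    (hn : ∀ n, ∀ᵐ t ∂σn n, |t| ≤ M) (h : ∀ᵐ t ∂σ, |t| ≤ M)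
    (hmom : ∀ p, Tendsto (fun n => moment (σn n) p) atTop (𝓝 (moment σ p))) {z : ℂ}
    (hz : M * ‖z‖ < 1) : Tendsto (fun n => momGen (σn n) z) atTop (𝓝 (momGen σ z)) := by
  rw [← (hasSum_momGen hM h hz).tsum_eq]
  simp only [← (hasSum_momGen hM (hn _) hz).tsum_eq]
  refine tendsto_tsum_of_dominated_convergence (summable_geometric_of_lt_one (by positivity) hz)
    (fun p => ((Complex.continuous_ofReal.tendsto _).comp (hmom p)).mul_const (z ^ p))
    (Eventually.of_forall fun n p => ?_)
  rw [norm_mul, norm_pow, mul_pow]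
  gcongr
  exact norm_moment_le (hn n) p

lemma tendsto_moment_of_tendsto_momGen [IsProbabilityMeasure σ] (hM : 0 ≤ M)
    (hn : ∀ n, ∀ᵐ t ∂σn n, |t| ≤ M) (h : ∀ᵐ t ∂σ, |t| ≤ M)
    (hgen : ∀ᶠ x : ℝ in 𝓝[>] 0, Tendsto (fun n => momGen (σn n) x) atTop (𝓝 (momGen σ x)))
    (p : ℕ) : Tendsto (fun n => moment (σn n) p) atTop (𝓝 (moment σ p)) := by
  have hcoeff : ∀ n q, ‖(moment (σn n) q : ℂ) - moment σ q‖ ≤ 2 * M ^ q := fun n q =>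
    (norm_sub_le _ _).trans (by linarith [norm_moment_le (hn n) q, norm_moment_le h q])
  have hseries : ∀ᶠ x : ℝ in 𝓝[>] 0, Tendsto
      (fun n => ∑' q, ((moment (σn n) q : ℂ) - moment σ q) * (x : ℂ) ^ q) atTop (𝓝 0) := by
    filter_upwards [hgen, eventually_mul_lt_nhdsGT M one_pos, self_mem_nhdsWithin]
      with x hx hxM (hx0 : 0 < x)
    have hxM' : M * ‖(x : ℂ)‖ < 1 := by rwa [Complex.norm_real, Real.norm_of_nonneg hx0.le]
    simp only [sub_mul, ((hasSum_momGen hM (hn _) hxM').sub (hasSum_momGen hM h hxM')).tsum_eq]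
    exact tendsto_sub_nhds_zero_iff.2 hx
  have := tendsto_sub_nhds_zero_iff.1 (tendsto_coeff_zero_of_tendsto_tsum hM hcoeff hseries p)
  exact (Complex.continuous_re.tendsto _).comp this

end Moments

lemma tendsto_zero_of_mul_eq_of_norm_tendsto_atTop {K u v : ℕ → ℂ}
    (hK : Tendsto (fun n => ‖K n‖) atTop atTop) {b : ℂ} (hv : Tendsto v atTop (𝓝 b))
    (huv : ∀ n, K n * u n = v n) : Tendsto u atTop (𝓝 0) := by
  have hKinv : Tendsto (fun n => (K n)⁻¹) atTop (𝓝 0) := by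
    simpa [tendsto_zero_iff_norm_tendsto_zero] using hK.inv_tendsto_atTop
  refine (zero_mul b ▸ hKinv.mul hv).congr' ?_
  filter_upwards [hK.eventually_gt_atTop 0] with n hn
  rw [← huv, inv_mul_cancel_left₀ (norm_pos_iff.1 hn)]

/-- Here `hrel` is `B_s = K·B_m` for the Boolean transforms `B = 1 - M⁻¹` at a point. Either side
forces `m → 1` since `K → ∞`, and then `K (m - 1) = B_s m`. -/
lemma tendsto_iff_tendsto_mul_sub_one_of_boolean {K m s : ℕ → ℂ}
    (hK : Tendsto (fun n => ‖K n‖) atTop atTop) (hm : ∀ n, m n ≠ 0)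
    (hrel : ∀ n, 1 - (s n)⁻¹ = K n * (1 - (m n)⁻¹)) {L : ℂ} (hL : L ≠ 0) :
    Tendsto s atTop (𝓝 L) ↔ Tendsto (fun n => K n * (m n - 1)) atTop (𝓝 (1 - L⁻¹)) := by
  have hmul : ∀ n, K n * (m n - 1) = (1 - (s n)⁻¹) * m n := fun n => by
    rw [hrel, mul_assoc, sub_mul, one_mul, inv_mul_cancel₀ (hm n)]
  constructor
  · intro hs
    have hB : Tendsto (fun n => 1 - (s n)⁻¹) atTop (𝓝 (1 - L⁻¹)) :=
      tendsto_const_nhds.sub (hs.inv₀ hL)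
    have hm1 : Tendsto m atTop (𝓝 1) := by
      have := tendsto_zero_of_mul_eq_of_norm_tendsto_atTop hK hB fun n => (hrel n).symm
      simpa using ((tendsto_const_nhds (x := (1 : ℂ))).sub this).inv₀ (by simp)
    simpa [hmul] using hB.mul hm1
  · intro h
    have hm1 : Tendsto m atTop (𝓝 1) :=
      tendsto_sub_nhds_zero_iff.1 (tendsto_zero_of_mul_eq_of_norm_tendsto_atTop hK h fun _ => rfl)
    have hB : Tendsto (fun n => 1 - (s n)⁻¹) atTop (𝓝 (1 - L⁻¹)) := by
      have := h.mul (hm1.inv₀ one_ne_zero)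
      rw [inv_one, mul_one] at this
      refine this.congr fun n => ?_
      rw [hmul, mul_inv_cancel_right₀ (hm n)]
    simpa using ((tendsto_const_nhds (x := (1 : ℂ))).sub hB).inv₀ (by simpa using hL)

theorem boolean_powers_conv_iff_general (k : ℕ → ℕ) (hk : StrictMono k)
    (μn σn : ℕ → Measure ℝ) (μ : Measure ℝ)
    (hprob : ∀ n, IsProbabilityMeasure (μn n) ∧ IsProbabilityMeasure (σn n))
    (hμprob : IsProbabilityMeasure μ)
    (M : ℝ) (hM : 0 < M)
    (hsupp : ∀ n, (μn n) (Set.Icc (-M) M)ᶜ = 0 ∧ (σn n) (Set.Icc (-M) M)ᶜ = 0)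
    (hμsupp : μ (Set.Icc (-M) M)ᶜ = 0)
    (δ : ℝ) (hδ : 0 < δ)
    (hboolpow : ∀ n, ∀ z : ℂ, ‖z‖ < δ → boolT (σn n) z = (k n : ℂ) * boolT (μn n) z) :
    (∀ p : ℕ, Tendsto (fun n => moment (σn n) p) atTop (nhds (moment μ p))) ↔
      ∃ ε : ℝ, 0 < ε ∧ ∀ z : ℂ, ‖z‖ < ε →
        Tendsto (fun n => (k n : ℂ) * (momGen (μn n) z - 1)) atTop (nhds (boolT μ z)) := by
  have hμn_prob := fun n => (hprob n).1
  have hσn_prob := fun n => (hprob n).2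
  have hμn := fun n => ae_abs_le_of_measure_compl_Icc (hsupp n).1
  have hσn := fun n => ae_abs_le_of_measure_compl_Icc (hsupp n).2
  have hμ := ae_abs_le_of_measure_compl_Icc hμsupp
  have hsmall : ∀ᶠ z : ℂ in 𝓝 0, ‖z‖ < δ ∧ M * ‖z‖ < 1 / 2 :=
    (tendsto_norm_zero.eventually_lt_const hδ).and
      ((mul_zero M ▸ tendsto_norm_zero.const_mul M).eventually_lt_const one_half_pos)
  have hkey : ∀ᶠ z : ℂ in 𝓝 0,
      Tendsto (fun n => momGen (σn n) z) atTop (𝓝 (momGen μ z)) ↔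
        Tendsto (fun n => (k n : ℂ) * (momGen (μn n) z - 1)) atTop (𝓝 (boolT μ z)) := by
    filter_upwards [hsmall] with z ⟨hzδ, hzM⟩
    exact tendsto_iff_tendsto_mul_sub_one_of_boolean
      ((tendsto_natCast_atTop_atTop.comp hk.tendsto_atTop).congr fun n =>
        (Complex.norm_natCast (k n)).symm)
      (fun n => momGen_ne_zero hM.le (hμn n) hzM) (fun n => hboolpow n z hzδ)
      (momGen_ne_zero hM.le hμ hzM)
  constructor
  · intro hmom
    obtain ⟨ε, hε, hε_key⟩ := Metric.eventually_nhds_iff.1 (hkey.and hsmall)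
    refine ⟨ε, hε, fun z hz => ?_⟩
    obtain ⟨hz_key, -, hzM⟩ := hε_key (by rwa [dist_zero_right])
    exact hz_key.1 (tendsto_momGen_of_tendsto_moment hM.le hσn hμ hmom (by linarith))
  · rintro ⟨ε, hε, hconv⟩
    have hconv' : ∀ᶠ z : ℂ in 𝓝 0, Tendsto (fun n => (k n : ℂ) * (momGen (μn n) z - 1)) atTop
        (𝓝 (boolT μ z)) :=
      Metric.eventually_nhds_iff.2 ⟨ε, hε, fun z hz => hconv z (by simpa using hz)⟩
    refine tendsto_moment_of_tendsto_momGen hM.le hσn hμ (nhdsWithin_le_nhds ?_)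
    exact (Complex.continuous_ofReal.tendsto' 0 0 Complex.ofReal_zero).eventually
      (hkey.and hconv' |>.mono fun z hz => hz.1.2 hz.2)

/-- For an increasing sequence `k_n` of positive integers and compactly supported probability
measures `μ_n` (with uniformly bounded supports), the Boolean convolution powers
`σ_n = μ_n^{⊎ k_n}` (characterized by `B_{σ_n} = k_n·B_{μ_n}`) converge in moments to a
compactly supported probability measure `μ` iff
`lim_n k_n·(M_{μ_n}(z) - 1) = B_μ(z)` for all `z` in a neighborhood of `0`. -/
theorem boolean_powers_conv_iff (k : ℕ → ℕ) (hk : StrictMono k) (hk0 : ∀ n, 0 < k n)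
    (μn σn : ℕ → Measure ℝ) (μ : Measure ℝ)
    (hprob : ∀ n, IsProbabilityMeasure (μn n) ∧ IsProbabilityMeasure (σn n))
    (hμprob : IsProbabilityMeasure μ)
    (M : ℝ) (hM : 0 < M)
    (hsupp : ∀ n, (μn n) (Set.Icc (-M) M)ᶜ = 0 ∧ (σn n) (Set.Icc (-M) M)ᶜ = 0)
    (hμsupp : μ (Set.Icc (-M) M)ᶜ = 0)
    (δ : ℝ) (hδ : 0 < δ)
    (hboolpow : ∀ n, ∀ z : ℂ, ‖z‖ < δ → boolT (σn n) z = (k n : ℂ) * boolT (μn n) z) :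
    (∀ p : ℕ, Tendsto (fun n => moment (σn n) p) atTop (nhds (moment μ p))) ↔
      ∃ ε : ℝ, 0 < ε ∧ ∀ z : ℂ, ‖z‖ < ε →
        Tendsto (fun n => (k n : ℂ) * (momGen (μn n) z - 1)) atTop (nhds (boolT μ z)) :=
  boolean_powers_conv_iff_general k hk μn σn μ hprob hμprob M hM hsupp hμsupp δ hδ hboolpow
end

section
/- Let (μ,ν) be a pair of compactly supported probability measures on ℝ with ∫t dν(t) ≠ 0, and define the c-free T-transform ᶜT_{(μ,ν)}(z) = ᶜR_{μ,ν}(R_ν^{-1}(z)) / R_ν^{-1}(z), where ᶜR is the c-free R-transform determined by (M_μ(z)-1)·M_ν(z) = M_μ(z)·ᶜR_{μ,ν}(z·M_ν(z)). Then ᶜT_{(μ,ν)}(z) = B_μ(M̃_ν^{-1}(z)) / M̃_ν^{-1}(z) on a neighborhood of 0, where B_μ is the Boolean transform of μ and M̃_ν^{-1} the compositional inverse of M̃_ν = M_ν - 1. -/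
open MeasureTheory

/-- `M̃_σ = M_σ - 1`. -/
noncomputable def momGenT (σ : Measure ℝ) (z : ℂ) : ℂ := momGen σ z - 1

/-!
Since `ν` has compact support, `M̃_ν` is analytic at `0`, and it is injective near `0` because
`M̃_ν⁻¹` is a left inverse there; by the open mapping theorem every small `z` is `M̃_ν(w)` for
a small `w`. Then `M_ν(w) = 1 + z`, the defining relation of `R_ν` gives `R_ν⁻¹(z) = w(1 + z)`,
and that of `ᶜR_{μ,ν}` at `w` gives `ᶜR_{μ,ν}(w(1 + z)) = (1 + z) B_μ(w)`, so both quotients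
equal `B_μ(w)/w`.
-/

open Metric Filter Topology

lemma half_le_norm_one_sub_mul {t R : ℝ} {z : ℂ} (ht : |t| ≤ R) (hz : R * ‖z‖ ≤ 1 / 2) :
    1 / 2 ≤ ‖1 - (t : ℂ) * z‖ := by
  have hprod : ‖(t : ℂ) * z‖ ≤ 1 / 2 := by
    rw [norm_mul, Complex.norm_real, Real.norm_eq_abs]
    exact (mul_le_mul_of_nonneg_right ht (norm_nonneg z)).trans hz
  have := norm_sub_norm_le (1 : ℂ) ((t : ℂ) * z)
  rw [norm_one] at this
  linarith

lemma norm_inv_one_sub_mul_le {t R : ℝ} {z : ℂ} (ht : |t| ≤ R) (hz : R * ‖z‖ ≤ 1 / 2) :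
    ‖(1 - (t : ℂ) * z)⁻¹‖ ≤ 2 := by
  have := half_le_norm_one_sub_mul ht hz
  rw [norm_inv, inv_le_comm₀ (by linarith) two_pos]
  linarith

lemma hasDerivAt_inv_one_sub_mul (t : ℝ) {z : ℂ} (hz : 1 - (t : ℂ) * z ≠ 0) :
    HasDerivAt (fun w : ℂ => (1 - (t : ℂ) * w)⁻¹) (t * (1 - (t : ℂ) * z)⁻¹ ^ 2) z := by
  have hlin : HasDerivAt (fun w : ℂ => 1 - (t : ℂ) * w) (-t) z := by
    simpa using ((hasDerivAt_id z).const_mul (t : ℂ)).const_sub 1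
  have h := hlin.inv hz
  rw [neg_neg, div_eq_mul_inv, ← inv_pow] at h
  exact h

lemma momGen_differentiableOn (σ : Measure ℝ) [IsFiniteMeasure σ] {R : ℝ} (hR : 0 < R)
    (hσ : ∀ᵐ t ∂σ, |t| ≤ R) : DifferentiableOn ℂ (momGen σ) (ball 0 (2 * R)⁻¹) := by
  have hsmall : ∀ z ∈ ball (0 : ℂ) (2 * R)⁻¹, R * ‖z‖ ≤ 1 / 2 := by
    intro z hz
    calc R * ‖z‖ ≤ R * (2 * R)⁻¹ := by gcongr; exact (mem_ball_zero_iff.mp hz).le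
      _ = 1 / 2 := by field_simp
  have hmeas : ∀ z : ℂ, AEStronglyMeasurable (fun t : ℝ => (1 - (t : ℂ) * z)⁻¹) σ := fun z =>
    (by fun_prop : Measurable fun t : ℝ => (1 - (t : ℂ) * z)⁻¹).aestronglyMeasurable
  intro z₀ hz₀
  refine DifferentiableAt.differentiableWithinAt (hasDerivAt_integral_of_dominated_loc_of_deriv_le
    (F' := fun z t => (t : ℂ) * (1 - (t : ℂ) * z)⁻¹ ^ 2) (isOpen_ball.mem_nhds hz₀)
    (Eventually.of_forall hmeas) ?_ ?_ ?_ (integrable_const (R * 2 ^ 2)) ?_).2.differentiableAt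
  · exact Integrable.mono' (integrable_const 2) (hmeas z₀)
      (hσ.mono fun t ht => norm_inv_one_sub_mul_le ht (hsmall z₀ hz₀))
  · exact (by fun_prop : Measurable fun t : ℝ =>
      (t : ℂ) * (1 - (t : ℂ) * z₀)⁻¹ ^ 2).aestronglyMeasurable
  · refine hσ.mono fun t ht z hz => ?_
    rw [norm_mul, norm_pow, Complex.norm_real, Real.norm_eq_abs]
    have := norm_inv_one_sub_mul_le ht (hsmall z hz)
    gcongr
  · refine hσ.mono fun t ht z hz => hasDerivAt_inv_one_sub_mul t ?_
    have := half_le_norm_one_sub_mul ht (hsmall z hz)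
    exact norm_ne_zero_iff.mp (by linarith)

lemma momGen_analyticAt (σ : Measure ℝ) [IsFiniteMeasure σ] {R : ℝ}
    (hσ : σ (Set.Icc (-R) R)ᶜ = 0) : AnalyticAt ℂ (momGen σ) 0 := by
  have hbound : ∀ᵐ t ∂σ, |t| ≤ max R 1 :=
    (show ∀ᵐ t ∂σ, t ∈ Set.Icc (-R) R from mem_ae_iff.mpr hσ).mono fun t ht =>
      abs_le.mpr ⟨by linarith [ht.1, le_max_left R 1], ht.2.trans (le_max_left R 1)⟩
  exact (momGen_differentiableOn σ (by positivity) hbound).analyticAt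
    (ball_mem_nhds 0 (by positivity))

lemma momGen_zero (σ : Measure ℝ) [IsProbabilityMeasure σ] : momGen σ 0 = 1 := by
  simp [momGen]

lemma momGenT_zero (σ : Measure ℝ) [IsProbabilityMeasure σ] : momGenT σ 0 = 0 := by
  simp [momGenT, momGen_zero]

lemma AnalyticAt.image_mem_nhds_of_injOn {f : ℂ → ℂ} {a : ℂ} {s t : Set ℂ}
    (hf : AnalyticAt ℂ f a) (hs : s ∈ 𝓝 a) (hinj : Set.InjOn f s) (ht : t ∈ 𝓝 a) :
    f '' t ∈ 𝓝 (f a) := by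
  have hnc : ¬ ∀ᶠ z in 𝓝 a, f z = f a := fun hconst => by
    have hpunct : ∀ᶠ z in 𝓝[≠] a, (f z = f a ∧ z ∈ s) ∧ z ≠ a :=
      ((hconst.and hs).filter_mono nhdsWithin_le_nhds).and self_mem_nhdsWithin
    obtain ⟨z, ⟨hfz, hz⟩, hza⟩ := hpunct.exists
    exact hza (hinj hz (mem_of_mem_nhds hs) hfz)
  exact hf.eventually_constant_or_nhds_le_map_nhds.resolve_left hnc (image_mem_map ht)

lemma div_mul_one_add_eq_one_sub_inv_div {m c w z : ℂ} (hz : 1 + z ≠ 0)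
    (hc : (m - 1) * (1 + z) = m * c) : c / (w * (1 + z)) = (1 - m⁻¹) / w := by
  have hm : m ≠ 0 := by
    rintro rfl
    exact hz (by linear_combination -hc)
  rw [mul_comm, ← div_div]
  congr 1
  field_simp
  linear_combination -hc

theorem cfree_T_transform_eq_general (μ ν : Measure ℝ)
    [IsProbabilityMeasure ν]
    (hνsupp : ∃ R : ℝ, ν (Set.Icc (-R) R)ᶜ = 0)
    (R Rinv Minv cR : ℂ → ℂ) (δ : ℝ) (hδ : 0 < δ)
    (hR : ∀ z : ℂ, ‖z‖ < δ → momGenT ν z = R (z + z * momGenT ν z))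
    (hRinv₁ : ∀ z : ℂ, ‖z‖ < δ → Rinv (R z) = z)
    (hMinv₁ : ∀ z : ℂ, ‖z‖ < δ → Minv (momGenT ν z) = z)
    (hcR : ∀ z : ℂ, ‖z‖ < δ →
      (momGen μ z - 1) * momGen ν z = momGen μ z * cR (z * momGen ν z)) :
    ∃ ε : ℝ, 0 < ε ∧ ∀ z : ℂ, ‖z‖ < ε →
      cR (Rinv z) / Rinv z = boolT μ (Minv z) / Minv z := by
  obtain ⟨Rν, hRν⟩ := hνsupp
  have hM : AnalyticAt ℂ (momGenT ν) 0 := (momGen_analyticAt ν hRν).sub analyticAt_const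
  have hinj : Set.InjOn (momGenT ν) (ball 0 δ) := fun z hz w hw hzw => by
    rw [← hMinv₁ z (mem_ball_zero_iff.mp hz), hzw, hMinv₁ w (mem_ball_zero_iff.mp hw)]
  have himage : momGenT ν '' ball 0 (δ / 2) ∈ 𝓝 0 := by
    simpa only [momGenT_zero] using
      hM.image_mem_nhds_of_injOn (ball_mem_nhds 0 hδ) hinj (ball_mem_nhds 0 (half_pos hδ))
  obtain ⟨ε, hε, hsmall⟩ :=
    Metric.eventually_nhds_iff.mp (inter_mem himage (ball_mem_nhds 0 one_pos))
  refine ⟨ε, hε, fun z hz => ?_⟩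
  obtain ⟨⟨w, hw, rfl⟩, hz1⟩ := hsmall (by simpa using hz)
  rw [mem_ball_zero_iff] at hw hz1
  have hwδ : ‖w‖ < δ := by linarith
  have hRinv : Rinv (momGenT ν w) = w * (1 + momGenT ν w) := by
    have hnorm : ‖w * (1 + momGenT ν w)‖ < δ := by
      rw [norm_mul]
      nlinarith [norm_add_le 1 (momGenT ν w), norm_one (α := ℂ), norm_nonneg w]
    conv_lhs => rw [hR w hwδ, ← mul_one_add, hRinv₁ _ hnorm]
  have hone_add : 1 + momGenT ν w ≠ 0 := fun h => by
    rw [eq_neg_of_add_eq_zero_right h, norm_neg, norm_one] at hz1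
    exact lt_irrefl 1 hz1
  rw [hMinv₁ w hwδ, hRinv, boolT]
  refine div_mul_one_add_eq_one_sub_inv_div hone_add ?_
  simpa only [momGenT, add_sub_cancel] using hcR w hwδ

/-- For a pair `(μ,ν)` with `ν` of nonzero mean, the c-free T-transform
`ᶜT_{(μ,ν)}(z) = ᶜR_{μ,ν}(R_ν⁻¹(z))/R_ν⁻¹(z)` equals `B_μ(M̃_ν⁻¹(z))/M̃_ν⁻¹(z)` near `0`. -/
theorem cfree_T_transform_eq (μ ν : Measure ℝ)
    [IsProbabilityMeasure μ] [IsProbabilityMeasure ν]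
    (hμsupp : ∃ R : ℝ, μ (Set.Icc (-R) R)ᶜ = 0)
    (hνsupp : ∃ R : ℝ, ν (Set.Icc (-R) R)ᶜ = 0)
    (hmean : (∫ t : ℝ, t ∂ν) ≠ 0)
    (R Rinv Minv cR : ℂ → ℂ) (δ : ℝ) (hδ : 0 < δ)
    (hR : ∀ z : ℂ, ‖z‖ < δ → momGenT ν z = R (z + z * momGenT ν z))
    (hRinv₁ : ∀ z : ℂ, ‖z‖ < δ → Rinv (R z) = z)
    (hRinv₂ : ∀ z : ℂ, ‖z‖ < δ → R (Rinv z) = z)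
    (hMinv₁ : ∀ z : ℂ, ‖z‖ < δ → Minv (momGenT ν z) = z)
    (hMinv₂ : ∀ z : ℂ, ‖z‖ < δ → momGenT ν (Minv z) = z)
    (hcR : ∀ z : ℂ, ‖z‖ < δ →
      (momGen μ z - 1) * momGen ν z = momGen μ z * cR (z * momGen ν z)) :
    ∃ ε : ℝ, 0 < ε ∧ ∀ z : ℂ, ‖z‖ < ε →
      cR (Rinv z) / Rinv z = boolT μ (Minv z) / Minv z :=
  cfree_T_transform_eq_general μ ν hνsupp R Rinv Minv cR δ hδ hR hRinv₁ hMinv₁ hcR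
end
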